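/- Let λ/μ be a skew shape and n a positive integer with gcd(|λ/μ|, n) = 1. Let ξ ∈ ℂ be a primitive n-th root of unity. Then for every integer k not divisible by n, s_{λ/μ}(1, ξ^k, ξ^{2k}, …, ξ^{(n−1)k}) = 0, while s_{λ/μ}(1, 1, …, 1) = |SSYT(λ/μ, n)|. -/

import Mathlib

open Finset Polynomial

/-- The cells of the skew shape `λ/μ`. -/
def skewCells (lam mu : YoungDiagram) : Finset (ℕ × ℕ) :=
  lam.cells \ mu.cells

/-- A semistandard Young tableau of skew shape `λ/μ`: a filling of the cells of `λ/μ`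
with positive integers, weakly increasing along rows and strictly increasing down columns.
Cells outside the shape carry the value `0`. -/
structure SkewSSYT (lam mu : YoungDiagram) where
  entry : ℕ → ℕ → ℕ
  pos' : ∀ i j, (i, j) ∈ skewCells lam mu → 0 < entry i j
  zeros' : ∀ i j, (i, j) ∉ skewCells lam mu → entry i j = 0
  row_weak' : ∀ i j1 j2, j1 < j2 → (i, j1) ∈ skewCells lam mu →
    (i, j2) ∈ skewCells lam mu → entry i j1 ≤ entry i j2
  col_strict' : ∀ i1 i2 j, i1 < i2 → (i1, j) ∈ skewCells lam mu →
    (i2, j) ∈ skewCells lam mu → entry i1 j < entry i2 j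

/-- `w_k(T)`: the number of entries of `T` equal to `k`. -/
def SkewSSYT.wt {lam mu : YoungDiagram} (T : SkewSSYT lam mu) (k : ℕ) : ℕ :=
  ((skewCells lam mu).filter fun c => T.entry c.1 c.2 = k).card

/-- `SSYT(λ/μ, n)`: semistandard skew tableaux of shape `λ/μ` with all entries at most `n`. -/
def SSYTbdd (lam mu : YoungDiagram) (n : ℕ) : Set (SkewSSYT lam mu) :=
  {T | ∀ i j, (i, j) ∈ skewCells lam mu → T.entry i j ≤ n}

/-- `SSYT(λ/μ, α)`: semistandard skew tableaux of shape `λ/μ` with exactly `α i`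
entries equal to `i + 1` for each `i : Fin n` (so content `α`, entries in `{1, …, n}`). -/
def SSYTcontent (lam mu : YoungDiagram) {n : ℕ} (α : Fin n → ℕ) : Set (SkewSSYT lam mu) :=
  {T | (∀ i : Fin n, T.wt ((i : ℕ) + 1) = α i) ∧
    ∀ i j, (i, j) ∈ skewCells lam mu → T.entry i j ≤ n}

/-- The cyclic shift `cyc_r(α)`, with `cyc r α i = α ((i + r) mod n)`. -/
def cyc {n : ℕ} (r : ℕ) (α : Fin n → ℕ) : Fin n → ℕ :=
  fun i => α ⟨((i : ℕ) + r) % n, Nat.mod_lt _ i.pos⟩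

/-- `z_r = Σ_j j ⬝ α_{j+r}` (indices mod `n`): the weighted sum of the shifted composition. -/
def zwt {n : ℕ} (α : Fin n → ℕ) (r : ℕ) : ℕ :=
  ∑ j : Fin n, ((j : ℕ) + 1) * cyc r α j

/-- `Σ_{j=1}^n j ⬝ w_j(T)`. -/
def weightedSum {lam mu : YoungDiagram} (n : ℕ) (T : SkewSSYT lam mu) : ℕ :=
  ∑ j : Fin n, ((j : ℕ) + 1) * T.wt ((j : ℕ) + 1)

/-- The (skew) Schur polynomial `s_{λ/μ}(x_1, …, x_n)` evaluated at `x`. -/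
noncomputable def skewSchurEval (lam mu : YoungDiagram) (n : ℕ) {R : Type*} [CommSemiring R]
    (x : Fin n → R) : R :=
  ∑ᶠ T ∈ SSYTbdd lam mu n, ∏ i : Fin n, x i ^ T.wt ((i : ℕ) + 1)

/-- `n(λ) = Σ_j (j - 1) λ_j`, i.e. the sum of the (0-indexed) row indices of the cells. -/
def nStat (lam : YoungDiagram) : ℕ :=
  ∑ c ∈ lam.cells, c.1

/-! The Bender–Knuth involutions exchange the numbers of entries `i + 1` and `i + 2` of a
tableau, so `s_{λ/μ}(x_1, …, x_n)` is symmetric; it is also homogeneous of degree `m = |λ/μ|`.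
For `ζ = ξ^k`, rotating the variables `(1, ζ, …, ζ^{n-1})` multiplies each of them by `ζ`, so
`s = ζ^m s`, while `ζ^m ≠ 1` because `n ∤ k` and `gcd(m, n) = 1`. -/

namespace SkewSSYT

variable {lam mu : YoungDiagram}

lemma mem_skewCells {r c : ℕ} : (r, c) ∈ skewCells lam mu ↔ (r, c) ∈ lam ∧ (r, c) ∉ mu := by
  simp [skewCells, YoungDiagram.mem_cells]

lemma lt_rowLen_of_mem_skewCells {r c : ℕ} (h : (r, c) ∈ skewCells lam mu) : c < lam.rowLen r :=
  YoungDiagram.mem_iff_lt_rowLen.mp (mem_skewCells.mp h).1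

lemma mem_skewCells_of_le_of_le {r₁ r₂ r c₁ c₂ c : ℕ} (h₁ : (r₁, c₁) ∈ skewCells lam mu)
    (h₂ : (r₂, c₂) ∈ skewCells lam mu) (hr₁ : r₁ ≤ r) (hr₂ : r ≤ r₂) (hc₁ : c₁ ≤ c)
    (hc₂ : c ≤ c₂) : (r, c) ∈ skewCells lam mu := by
  rw [mem_skewCells] at *
  exact ⟨lam.up_left_mem hr₂ hc₂ h₂.1, fun hmu => h₁.2 (mu.up_left_mem hr₁ hc₁ hmu)⟩

@[ext]
lemma ext {T T' : SkewSSYT lam mu} (h : T.entry = T'.entry) : T = T' := by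
  cases T; cases T'; simpa using h

variable (T : SkewSSYT lam mu)

lemma wt_zero : T.wt 0 = 0 := by
  simp only [wt, card_eq_zero, filter_eq_empty_iff]
  exact fun c hc => (T.pos' c.1 c.2 hc).ne'

/-- The cells of `μ` carry the entry `0`, so the whole row of `λ` is weakly increasing. -/
lemma entry_le_entry_of_le {r c₁ c₂ : ℕ} (h : c₁ ≤ c₂) (hc₂ : c₂ < lam.rowLen r) :
    T.entry r c₁ ≤ T.entry r c₂ := by
  by_cases h₁ : (r, c₁) ∈ skewCells lam mu
  · have h₂ : (r, c₂) ∈ skewCells lam mu :=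
      mem_skewCells.mpr ⟨YoungDiagram.mem_iff_lt_rowLen.mpr hc₂,
        fun hmu => (mem_skewCells.mp h₁).2 (mu.up_left_mem le_rfl h hmu)⟩
    rcases h.eq_or_lt with rfl | hlt
    · exact le_rfl
    · exact T.row_weak' r c₁ c₂ hlt h₁ h₂
  · simp [T.zeros' r c₁ h₁]

lemma entry_le_of_entry_succ_le {r c j : ℕ} (hc : c < lam.rowLen (r + 1))
    (hj : T.entry (r + 1) c ≤ j + 1) : T.entry r c ≤ j := by
  by_cases hr : (r, c) ∈ skewCells lam mu
  · have h : (r + 1, c) ∈ skewCells lam mu :=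
      mem_skewCells.mpr ⟨YoungDiagram.mem_iff_lt_rowLen.mpr hc,
        fun hmu => (mem_skewCells.mp hr).2 (mu.up_left_mem r.le_succ le_rfl hmu)⟩
    have := T.col_strict' r (r + 1) c r.lt_succ_self hr h
    omega
  · simp [T.zeros' r c hr]

def rowCountLE (j r : ℕ) : ℕ :=
  #{c ∈ range (lam.rowLen r) | T.entry r c ≤ j}

lemma lt_rowCountLE_iff {j r c : ℕ} (hc : c < lam.rowLen r) :
    c < T.rowCountLE j r ↔ T.entry r c ≤ j := by
  constructor
  · intro h
    by_contra hcj
    have : {c' ∈ range (lam.rowLen r) | T.entry r c' ≤ j} ⊆ range c := by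
      intro c' hc'
      simp only [mem_filter, mem_range] at hc' ⊢
      by_contra! hle
      exact hcj ((T.entry_le_entry_of_le hle hc'.1).trans hc'.2)
    have := card_le_card this
    rw [card_range] at this
    exact absurd h (by unfold rowCountLE; omega)
  · intro hcj
    have : range (c + 1) ⊆ {c' ∈ range (lam.rowLen r) | T.entry r c' ≤ j} := by
      intro c' hc'
      simp only [mem_filter, mem_range] at hc' ⊢
      exact ⟨by omega, (T.entry_le_entry_of_le (by omega) hc).trans hcj⟩
    simpa [rowCountLE] using card_le_card this

lemma rowCountLE_le_rowLen (j r : ℕ) : T.rowCountLE j r ≤ lam.rowLen r :=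
  (card_filter_le _ _).trans (card_range _).le

lemma rowCountLE_mono {j₁ j₂ : ℕ} (h : j₁ ≤ j₂) (r : ℕ) :
    T.rowCountLE j₁ r ≤ T.rowCountLE j₂ r :=
  card_le_card fun c hc => by
    simp only [mem_filter] at hc ⊢
    exact ⟨hc.1, hc.2.trans h⟩

lemma rowCountLE_succ_succ_le (j r : ℕ) : T.rowCountLE (j + 1) (r + 1) ≤ T.rowCountLE j r := by
  by_contra! h
  set c := T.rowCountLE j r
  have hc₁ : c < lam.rowLen (r + 1) := h.trans_le (T.rowCountLE_le_rowLen _ _)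
  have hc : c < lam.rowLen r := hc₁.trans_le (lam.rowLen_anti r (r + 1) r.le_succ)
  exact (lt_irrefl c) ((T.lt_rowCountLE_iff hc).mpr
    (T.entry_le_of_entry_succ_le hc₁ ((T.lt_rowCountLE_iff hc₁).mp h)))

lemma rowCountLE_of_colLen_le {r : ℕ} (h : lam.colLen 0 ≤ r) (j : ℕ) : T.rowCountLE j r = 0 := by
  have : lam.rowLen r = 0 := by
    by_contra hr
    exact absurd (YoungDiagram.mem_iff_lt_colLen.mp
      (YoungDiagram.mem_iff_lt_rowLen.mpr (Nat.pos_of_ne_zero hr))) (by omega)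
  simp [rowCountLE, this]

lemma eq_of_rowCountLE_eq {T T' : SkewSSYT lam mu}
    (h : ∀ j r, T.rowCountLE j r = T'.rowCountLE j r) : T = T' := by
  ext r c
  by_cases hc : c < lam.rowLen r
  · have hle : ∀ j, T.entry r c ≤ j ↔ T'.entry r c ≤ j := fun j => by
      rw [← T.lt_rowCountLE_iff hc, ← T'.lt_rowCountLE_iff hc, h]
    exact le_antisymm ((hle _).mpr le_rfl) ((hle _).mp le_rfl)
  · have hns : (r, c) ∉ skewCells lam mu := fun hs => hc (lt_rowLen_of_mem_skewCells hs)
    rw [T.zeros' r c hns, T'.zeros' r c hns]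

/-! ### Bender–Knuth involutions -/

/-- In row `r`, the entries `i + 1` lying above an `i + 2` and the entries `i + 2` lying below
an `i + 1` are paired; the unpaired ones fill the columns `[freeStart i r, freeEnd i r)`. -/
def freeStart (i r : ℕ) : ℕ :=
  max (T.rowCountLE i r) (T.rowCountLE (i + 2) (r + 1))

def freeEnd (i : ℕ) : ℕ → ℕ
  | 0 => T.rowCountLE (i + 2) 0
  | r + 1 => min (T.rowCountLE (i + 2) (r + 1)) (T.rowCountLE i r)

/-- The unpaired run `(i+1)^a (i+2)^b` of row `r` becomes `(i+1)^b (i+2)^a`; this is the new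
number of cells with entry at most `i + 1`. -/
def bkCut (i r : ℕ) : ℕ :=
  T.freeStart i r + T.freeEnd i r - T.rowCountLE (i + 1) r

lemma freeStart_le (i r : ℕ) : T.freeStart i r ≤ T.rowCountLE (i + 1) r :=
  max_le (T.rowCountLE_mono i.le_succ r) (T.rowCountLE_succ_succ_le (i + 1) r)

lemma le_freeEnd (i r : ℕ) : T.rowCountLE (i + 1) r ≤ T.freeEnd i r := by
  cases r with
  | zero => exact T.rowCountLE_mono (by omega) 0
  | succ r => exact le_min (T.rowCountLE_mono (by omega) _) (T.rowCountLE_succ_succ_le i r)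

lemma freeEnd_le (i r : ℕ) : T.freeEnd i r ≤ T.rowCountLE (i + 2) r := by
  cases r with
  | zero => exact le_rfl
  | succ r => exact min_le_left _ _

lemma freeStart_le_bkCut (i r : ℕ) : T.freeStart i r ≤ T.bkCut i r := by
  have := T.le_freeEnd i r
  unfold bkCut; omega

lemma bkCut_le_freeEnd (i r : ℕ) : T.bkCut i r ≤ T.freeEnd i r := by
  have := T.freeStart_le i r
  unfold bkCut; omega

lemma rowCountLE_le_bkCut (i r : ℕ) : T.rowCountLE i r ≤ T.bkCut i r :=
  (le_max_left _ _).trans (T.freeStart_le_bkCut i r)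

lemma bkCut_le_rowCountLE (i r : ℕ) : T.bkCut i r ≤ T.rowCountLE (i + 2) r :=
  (T.bkCut_le_freeEnd i r).trans (T.freeEnd_le i r)

def bkEntry (i r c : ℕ) : ℕ :=
  if T.entry r c = i + 1 ∨ T.entry r c = i + 2 then (if c < T.bkCut i r then i + 1 else i + 2)
  else T.entry r c

lemma bkEntry_of_not {i r c : ℕ} (h : ¬(T.entry r c = i + 1 ∨ T.entry r c = i + 2)) :
    T.bkEntry i r c = T.entry r c := if_neg h

lemma bkEntry_pos {i r c : ℕ} (h : (r, c) ∈ skewCells lam mu) : 0 < T.bkEntry i r c := by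
  have := T.pos' r c h
  unfold bkEntry
  split_ifs <;> omega

def bkRowCountLE (i j r : ℕ) : ℕ :=
  if j = i + 1 then T.bkCut i r else T.rowCountLE j r

lemma bkEntry_le_iff {i j r c : ℕ} (hc : c < lam.rowLen r) :
    T.bkEntry i r c ≤ j ↔ c < T.bkRowCountLE i j r := by
  have h₀ := T.lt_rowCountLE_iff (j := i) hc
  have h₂ := T.lt_rowCountLE_iff (j := i + 2) hc
  have hj := T.lt_rowCountLE_iff (j := j) hc
  have := T.rowCountLE_le_bkCut i r
  have := T.bkCut_le_rowCountLE i r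
  unfold bkEntry bkRowCountLE
  split_ifs <;> omega

lemma bkRowCountLE_le_rowLen (i j r : ℕ) : T.bkRowCountLE i j r ≤ lam.rowLen r := by
  unfold bkRowCountLE
  split_ifs
  · exact (T.bkCut_le_rowCountLE i r).trans (T.rowCountLE_le_rowLen _ r)
  · exact T.rowCountLE_le_rowLen j r

lemma bkRowCountLE_succ_succ_le (i j r : ℕ) :
    T.bkRowCountLE i (j + 1) (r + 1) ≤ T.bkRowCountLE i j r := by
  have := T.rowCountLE_succ_succ_le j r
  have := (T.bkCut_le_freeEnd i (r + 1)).trans (min_le_right _ _)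
  have := (le_max_right _ _).trans (T.freeStart_le_bkCut i r)
  unfold bkRowCountLE
  split_ifs <;> simp_all

lemma bkEntry_row_weak {i r c₁ c₂ : ℕ} (h : c₁ < c₂) (hc₂ : c₂ < lam.rowLen r) :
    T.bkEntry i r c₁ ≤ T.bkEntry i r c₂ :=
  (T.bkEntry_le_iff (h.trans hc₂)).mpr (h.trans ((T.bkEntry_le_iff hc₂).mp le_rfl))

lemma bkEntry_lt_bkEntry_succ {i r c : ℕ} (hc : c < lam.rowLen (r + 1))
    (hpos : 0 < T.bkEntry i (r + 1) c) : T.bkEntry i r c < T.bkEntry i (r + 1) c := by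
  obtain ⟨j, hj⟩ := Nat.exists_eq_add_of_lt hpos
  have hc' : c < lam.rowLen r := hc.trans_le (lam.rowLen_anti r (r + 1) r.le_succ)
  have hbelow : c < T.bkRowCountLE i (j + 1) (r + 1) := (T.bkEntry_le_iff hc).mp (by omega)
  have := (T.bkEntry_le_iff hc').mpr (hbelow.trans_le (T.bkRowCountLE_succ_succ_le i j r))
  omega

lemma bkEntry_col_strict {i r₁ r₂ c : ℕ} (h : r₁ < r₂) (h₁ : (r₁, c) ∈ skewCells lam mu)
    (h₂ : (r₂, c) ∈ skewCells lam mu) : T.bkEntry i r₁ c < T.bkEntry i r₂ c := by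
  induction r₂ with
  | zero => omega
  | succ r ih =>
    have hstep := T.bkEntry_lt_bkEntry_succ (i := i) (lt_rowLen_of_mem_skewCells h₂)
      (T.bkEntry_pos h₂)
    rcases Nat.lt_succ_iff_lt_or_eq.mp h with h | rfl
    · exact (ih h (mem_skewCells_of_le_of_le h₁ h₂ h.le r.le_succ le_rfl le_rfl)).trans hstep
    · exact hstep

/-- The Bender–Knuth involution exchanging the roles of the entries `i + 1` and `i + 2`. -/
def bk (i : ℕ) : SkewSSYT lam mu where
  entry := T.bkEntry i
  pos' _ _ h := T.bkEntry_pos h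
  zeros' r c h := by
    have := T.zeros' r c h
    rw [T.bkEntry_of_not (by omega), this]
  row_weak' _ _ _ h _ h₂ := T.bkEntry_row_weak h (lt_rowLen_of_mem_skewCells h₂)
  col_strict' _ _ _ h h₁ h₂ := T.bkEntry_col_strict h h₁ h₂

lemma rowCountLE_bk (i j r : ℕ) : (T.bk i).rowCountLE j r = T.bkRowCountLE i j r := by
  have : {c ∈ range (lam.rowLen r) | T.bkEntry i r c ≤ j} = range (T.bkRowCountLE i j r) := by
    ext c
    simp only [mem_filter, mem_range]
    have := T.bkRowCountLE_le_rowLen i j r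
    constructor
    · exact fun ⟨hc, h⟩ => (T.bkEntry_le_iff hc).mp h
    · exact fun h => ⟨by omega, (T.bkEntry_le_iff (by omega)).mpr h⟩
  rw [rowCountLE, bk, this, card_range]

lemma rowCountLE_bk_of_ne {i j : ℕ} (hj : j ≠ i + 1) (r : ℕ) :
    (T.bk i).rowCountLE j r = T.rowCountLE j r := by
  rw [rowCountLE_bk, bkRowCountLE, if_neg hj]

lemma rowCountLE_bk_self (i r : ℕ) : (T.bk i).rowCountLE (i + 1) r = T.bkCut i r := by
  rw [rowCountLE_bk, bkRowCountLE, if_pos rfl]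

lemma bkCut_bk (i r : ℕ) : (T.bk i).bkCut i r = T.rowCountLE (i + 1) r := by
  have hs : (T.bk i).freeStart i r = T.freeStart i r := by
    simp only [freeStart, T.rowCountLE_bk_of_ne (i := i) (j := i) (by omega),
      T.rowCountLE_bk_of_ne (i := i) (j := i + 2) (by omega)]
  have he : (T.bk i).freeEnd i r = T.freeEnd i r := by
    cases r <;> simp only [freeEnd, T.rowCountLE_bk_of_ne (i := i) (j := i) (by omega),
      T.rowCountLE_bk_of_ne (i := i) (j := i + 2) (by omega)]
  have := T.freeStart_le i r
  have := T.le_freeEnd i r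
  rw [bkCut, hs, he, rowCountLE_bk_self, bkCut]
  omega

lemma bk_bk (i : ℕ) : (T.bk i).bk i = T := by
  refine eq_of_rowCountLE_eq fun j r => ?_
  by_cases hj : j = i + 1
  · rw [hj, rowCountLE_bk_self, bkCut_bk]
  · rw [rowCountLE_bk_of_ne _ hj, rowCountLE_bk_of_ne _ hj]

lemma bk_mem_SSYTbdd {n i : ℕ} (hi : i + 2 ≤ n) {T : SkewSSYT lam mu}
    (hT : T ∈ SSYTbdd lam mu n) : T.bk i ∈ SSYTbdd lam mu n := by
  intro r c h
  have := hT r c h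
  change T.bkEntry i r c ≤ n
  unfold bkEntry
  split_ifs <;> omega

/-! ### Contents via cumulative counts -/

def countLE (j : ℕ) : ℕ :=
  #{c ∈ lam.cells | T.entry c.1 c.2 ≤ j}

lemma countLE_eq_sum {N : ℕ} (hN : lam.colLen 0 ≤ N) (j : ℕ) :
    T.countLE j = ∑ r ∈ range N, T.rowCountLE j r := by
  have hrow : ∀ c ∈ {c ∈ lam.cells | T.entry c.1 c.2 ≤ j}, c.1 ∈ range N := fun c hc => by
    have hc := (YoungDiagram.mem_cells _).mp (mem_filter.mp hc).1
    have := YoungDiagram.mem_iff_lt_colLen.mp (lam.up_left_mem le_rfl (Nat.zero_le c.2) hc)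
    rw [mem_range]; omega
  rw [countLE, card_eq_sum_card_fiberwise hrow]
  refine sum_congr rfl fun r _ => card_nbij' Prod.snd (fun c => (r, c)) ?_ ?_ ?_ ?_
  · rintro ⟨r', c⟩ hc
    rw [mem_coe, mem_filter, mem_filter, YoungDiagram.mem_cells] at hc
    obtain ⟨⟨hlam, hle⟩, rfl⟩ := hc
    rw [mem_coe, mem_filter, mem_range]
    exact ⟨YoungDiagram.mem_iff_lt_rowLen.mp hlam, hle⟩
  · intro c hc
    simpa [rowCountLE, YoungDiagram.mem_iff_lt_rowLen] using hc
  · rintro ⟨r', c⟩ hc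
    simp only [coe_filter] at hc
    rw [← hc.2]
  · intro c _
    rfl

lemma countLE_mono {j₁ j₂ : ℕ} (h : j₁ ≤ j₂) : T.countLE j₁ ≤ T.countLE j₂ :=
  card_le_card fun c hc => by
    simp only [mem_filter] at hc ⊢
    exact ⟨hc.1, hc.2.trans h⟩

lemma wt_succ (j : ℕ) : T.wt (j + 1) = T.countLE (j + 1) - T.countLE j := by
  have hsub : {c ∈ lam.cells | T.entry c.1 c.2 ≤ j} ⊆ {c ∈ lam.cells | T.entry c.1 c.2 ≤ j + 1} :=
    fun c hc => by
      simp only [mem_filter] at hc ⊢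
      exact ⟨hc.1, by omega⟩
  have : {c ∈ skewCells lam mu | T.entry c.1 c.2 = j + 1}
      = {c ∈ lam.cells | T.entry c.1 c.2 ≤ j + 1} \ {c ∈ lam.cells | T.entry c.1 c.2 ≤ j} := by
    ext c
    simp only [mem_filter, mem_sdiff]
    constructor
    · rintro ⟨hs, he⟩
      exact ⟨⟨(mem_sdiff.mp hs).1, he.le⟩, fun h => by omega⟩
    · rintro ⟨⟨hlam, hle⟩, hnot⟩
      have hs : c ∈ skewCells lam mu := by
        by_contra hns
        exact hnot ⟨hlam, by simp [T.zeros' c.1 c.2 hns]⟩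
      have : ¬T.entry c.1 c.2 ≤ j := fun h => hnot ⟨hlam, h⟩
      exact ⟨hs, by omega⟩
  rw [wt, this, card_sdiff_of_subset hsub, countLE, countLE]

variable {T}

lemma countLE_bk_of_ne {i j : ℕ} (hj : j ≠ i + 1) : (T.bk i).countLE j = T.countLE j := by
  simp only [countLE_eq_sum _ le_rfl, T.rowCountLE_bk_of_ne hj]

/-- `freeStart i r` and `freeEnd i (r + 1)` are the `max` and the `min` of the same two counts,
so the row sums telescope. -/
lemma countLE_bk_add_countLE (i : ℕ) :
    (T.bk i).countLE (i + 1) + T.countLE (i + 1) = T.countLE i + T.countLE (i + 2) := by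
  set N := lam.colLen 0
  have hcut : ∀ r, T.bkCut i r + T.rowCountLE (i + 1) r = T.freeStart i r + T.freeEnd i r :=
    fun r => by have := T.freeStart_le i r; have := T.le_freeEnd i r; unfold bkCut; omega
  have hpair : ∀ r, T.freeStart i r + T.freeEnd i (r + 1)
      = T.rowCountLE i r + T.rowCountLE (i + 2) (r + 1) := fun r => by
    simp only [freeStart, freeEnd]; omega
  have hlast : T.freeStart i N = T.rowCountLE i N := by
    simp [freeStart, T.rowCountLE_of_colLen_le (r := N + 1) (by omega)]
  simp only [countLE_eq_sum _ N.le_succ, rowCountLE_bk_self, ← sum_add_distrib, hcut]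
  rw [sum_add_distrib, sum_add_distrib, sum_range_succ (T.freeStart i),
    sum_range_succ' (T.freeEnd i), sum_range_succ (T.rowCountLE i),
    sum_range_succ' (T.rowCountLE (i + 2)), hlast]
  have := sum_congr rfl fun r (_ : r ∈ range N) => hpair r
  rw [sum_add_distrib, sum_add_distrib] at this
  have hfirst : T.freeEnd i 0 = T.rowCountLE (i + 2) 0 := rfl
  omega

lemma wt_bk (i j : ℕ) : (T.bk i).wt j = T.wt (Equiv.swap (i + 1) (i + 2) j) := by
  have hsum : (T.bk i).countLE (i + 1) + T.countLE (i + 1)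
      = T.countLE i + T.countLE (i + 1 + 1) := T.countLE_bk_add_countLE i
  have h₀₁ := T.countLE_mono (Nat.le_add_right i 1)
  have h₁₂ := T.countLE_mono (Nat.le_add_right (i + 1) 1)
  rcases j with _ | k
  · rw [Equiv.swap_apply_of_ne_of_ne (by omega) (by omega), wt_zero, wt_zero]
  rw [Equiv.swap_apply_def, wt_succ]
  split_ifs with h₁ h₂
  · obtain rfl : k = i := by omega
    rw [wt_succ, countLE_bk_of_ne (i := k) (j := k) (by omega)]
    omega
  · obtain rfl : k = i + 1 := by omega
    rw [wt_succ, countLE_bk_of_ne (i := i) (j := i + 1 + 1) (by omega)]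
    omega
  · rw [wt_succ, countLE_bk_of_ne h₁, countLE_bk_of_ne (by omega)]

lemma sum_wt_eq_card {n : ℕ} (hT : T ∈ SSYTbdd lam mu n) :
    ∑ i : Fin n, T.wt ((i : ℕ) + 1) = #(skewCells lam mu) := by
  have hval : ∀ c ∈ skewCells lam mu, T.entry c.1 c.2 - 1 ∈ range n := fun c hc => by
    have := T.pos' c.1 c.2 hc
    have := hT c.1 c.2 hc
    rw [mem_range]; omega
  rw [Fin.sum_univ_eq_sum_range (fun i => T.wt (i + 1)), card_eq_sum_card_fiberwise hval]
  refine sum_congr rfl fun i _ => congrArg card (filter_congr fun c hc => ?_)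
  have := T.pos' c.1 c.2 hc
  omega

lemma finite_SSYTbdd (lam mu : YoungDiagram) (n : ℕ) : (SSYTbdd lam mu n).Finite := by
  let restrict (T : SSYTbdd lam mu n) : skewCells lam mu → Fin (n + 1) :=
    fun c => ⟨T.1.entry c.1.1 c.1.2, Nat.lt_succ_of_le (T.2 c.1.1 c.1.2 c.2)⟩
  have hinj : Function.Injective restrict := by
    intro T₁ T₂ h
    refine Subtype.ext (ext (funext₂ fun r c => ?_))
    by_cases hc : (r, c) ∈ skewCells lam mu
    · simpa [restrict] using congrFun h ⟨(r, c), hc⟩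
    · rw [T₁.1.zeros' r c hc, T₂.1.zeros' r c hc]
  exact Set.finite_coe_iff.mp (Finite.of_injective restrict hinj)

end SkewSSYT

section Symmetry

variable {R : Type*} [CommSemiring R] (lam mu : YoungDiagram)

lemma Fin.val_swap_castSucc_succ_add_one {m : ℕ} (i : Fin m) (j : Fin (m + 1)) :
    (Equiv.swap i.castSucc i.succ j : ℕ) + 1
      = Equiv.swap ((i : ℕ) + 1) ((i : ℕ) + 2) ((j : ℕ) + 1) := by
  simp only [Equiv.swap_apply_def, Fin.ext_iff, Fin.val_castSucc, Fin.val_succ]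
  split_ifs <;> simp_all

lemma skewSchurEval_comp_swap {m : ℕ} (i : Fin m) (x : Fin (m + 1) → R) :
    skewSchurEval lam mu (m + 1) (x ∘ Equiv.swap i.castSucc i.succ)
      = skewSchurEval lam mu (m + 1) x := by
  set S := SSYTbdd lam mu (m + 1)
  have hmaps : Set.MapsTo (SkewSSYT.bk · i) S S := fun T hT => SkewSSYT.bk_mem_SSYTbdd (by omega) hT
  have hinv : Set.InvOn (SkewSSYT.bk · i) (SkewSSYT.bk · i) S S :=
    ⟨fun T _ => SkewSSYT.bk_bk T i, fun T _ => SkewSSYT.bk_bk T i⟩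
  refine finsum_mem_eq_of_bijOn _ (hinv.bijOn hmaps hmaps) fun T _ => ?_
  set σ := Equiv.swap i.castSucc i.succ
  simp only [Function.comp_apply, SkewSSYT.wt_bk, ← Fin.val_swap_castSucc_succ_add_one]
  calc ∏ j, x (σ j) ^ T.wt ((j : ℕ) + 1)
      _ = ∏ j, x (σ j) ^ T.wt ((σ (σ j) : ℕ) + 1) := by simp [σ]
      _ = ∏ j, x j ^ T.wt ((σ j : ℕ) + 1) := Equiv.prod_comp σ fun j => x j ^ T.wt ((σ j : ℕ) + 1)

theorem skewSchurEval_comp_perm {n : ℕ} (σ : Equiv.Perm (Fin n)) (x : Fin n → R) :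
    skewSchurEval lam mu n (x ∘ σ) = skewSchurEval lam mu n x := by
  cases n with
  | zero => rw [Subsingleton.elim σ 1]; rfl
  | succ m =>
    induction σ using Submonoid.induction_of_closure_eq_top_left
      (Equiv.Perm.mclosure_swap_castSucc_succ m) generalizing x with
    | one => rfl
    | mul_left σ hσ τ ih =>
      obtain ⟨i, rfl⟩ := hσ
      rw [Equiv.Perm.coe_mul, ← Function.comp_assoc, ih, skewSchurEval_comp_swap]

lemma skewSchurEval_const_mul {n : ℕ} (c : R) (x : Fin n → R) :
    skewSchurEval lam mu n (fun i => c * x i)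
      = c ^ #(skewCells lam mu) * skewSchurEval lam mu n x := by
  rw [skewSchurEval, skewSchurEval, mul_finsum_mem' _ _ (SkewSSYT.finite_SSYTbdd lam mu n)]
  refine finsum_mem_congr rfl fun T hT => ?_
  simp only [mul_pow, prod_mul_distrib, prod_pow_eq_pow_sum, T.sum_wt_eq_card hT]

end Symmetry

lemma pow_finRotate {M : Type*} [Monoid M] {ζ : M} {n : ℕ} (h : ζ ^ n = 1) (i : Fin n) :
    ζ ^ (finRotate n i : ℕ) = ζ * ζ ^ (i : ℕ) := by
  cases n with
  | zero => exact i.elim0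
  | succ m =>
    rw [coe_finRotate]
    split_ifs with hi
    · rw [hi, Fin.val_last, ← pow_succ', h, pow_zero]
    · rw [pow_succ']

theorem skewSchur_vanishes_at_roots_general (lam mu : YoungDiagram) (hsub : mu ≤ lam)
    (n : ℕ) (hgcd : Nat.gcd (lam.card - mu.card) n = 1)
    (ξ : ℂ) (hξ : IsPrimitiveRoot ξ n) :
    (∀ k : ℤ, ¬ (n : ℤ) ∣ k →
      skewSchurEval lam mu n (fun i => ξ ^ (((i : ℕ) : ℤ) * k)) = 0) ∧
    skewSchurEval lam mu n (fun _ => (1 : ℂ)) = (Nat.card ↥(SSYTbdd lam mu n) : ℂ) := by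
  refine ⟨fun k hk => ?_, ?_⟩
  · set ζ := ξ ^ k
    have hζn : ζ ^ n = 1 := by
      rw [← zpow_natCast, ← zpow_mul, mul_comm, zpow_mul, zpow_natCast, hξ.pow_eq_one, one_zpow]
    have hζm : ζ ^ #(skewCells lam mu) ≠ 1 := by
      rw [skewCells, card_sdiff_of_subset hsub, ← zpow_natCast, ← zpow_mul,
        Ne, hξ.zpow_eq_one_iff_dvd]
      exact fun h => hk ((Nat.isCoprime_iff_coprime.mpr hgcd).symm.dvd_of_dvd_mul_right h)
    have hs := skewSchurEval_comp_perm lam mu (finRotate n) (fun i : Fin n => ζ ^ (i : ℕ))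
    simp only [Function.comp_def, pow_finRotate hζn, skewSchurEval_const_mul] at hs
    have hx : (fun i : Fin n => ξ ^ (((i : ℕ) : ℤ) * k)) = fun i : Fin n => ζ ^ (i : ℕ) :=
      funext fun i => by rw [mul_comm, zpow_mul, zpow_natCast]
    rw [hx]
    exact (mul_left_eq_self₀.mp hs).resolve_left hζm
  · have hfin := SkewSSYT.finite_SSYTbdd lam mu n
    simp [skewSchurEval, finsum_mem_eq_finite_toFinset_sum _ hfin,
      Set.ncard_eq_toFinset_card _ hfin]

/-- If `gcd(|λ/μ|, n) = 1` and `ξ` is a primitive `n`-th root of unity, then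
`s_{λ/μ}(1, ξ^k, ξ^{2k}, …, ξ^{(n−1)k}) = 0` for every integer `k` with `n ∤ k`, while
`s_{λ/μ}(1, 1, …, 1) = |SSYT(λ/μ, n)|`. -/
theorem skewSchur_vanishes_at_roots (lam mu : YoungDiagram) (hsub : mu ≤ lam)
    (n : ℕ) (hn : 0 < n) (hgcd : Nat.gcd (lam.card - mu.card) n = 1)
    (ξ : ℂ) (hξ : IsPrimitiveRoot ξ n) :
    (∀ k : ℤ, ¬ (n : ℤ) ∣ k →
      skewSchurEval lam mu n (fun i => ξ ^ (((i : ℕ) : ℤ) * k)) = 0) ∧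
    skewSchurEval lam mu n (fun _ => (1 : ℂ)) = (Nat.card ↥(SSYTbdd lam mu n) : ℂ) :=
  skewSchur_vanishes_at_roots_general lam mu hsub n hgcd ξ hξ
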